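/- arXiv:2407.13116 — 4 statements merged into one kernel-verified Lean document; each statement's English description precedes it below -/
import Mathlib

section
/- For any real t with |t| ≤ ν (ν the largest finite float), the value fl(t / fl(1 + hypot(t,1))) computed with correctly rounded operations satisfies 0 ≤ |result| ≤ 1, where hypot is correctly rounded and rounding is to nearest. -/
set_option maxHeartbeats 1000000 in
/-- For any real `t` with `|t| ≤ ν`, the computed half-angle tangent
`fl(t / fl(1 + hypot(t,1)))`, with correctly rounded (to nearest) operations and
`hypot(t,1) = fl(√(t²+1))`, satisfies `0 ≤ |result| ≤ 1`. -/
theorem stmt_2 (p : ℕ) (eν : ℤ) (hp : 1 ≤ p) (hgap : 1 ≤ eν - p)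
    (Rep : ℝ → Prop)
    (hRep : ∀ x : ℝ, Rep x ↔ ∃ m e : ℤ, |m| < 2 ^ p ∧ e ≤ eν - (p - 1) ∧
      x = (m : ℝ) * 2 ^ e)
    (fl : ℝ → ℝ)
    (hfl_rep : ∀ x : ℝ, Rep (fl x))
    (hfl_near : ∀ x y : ℝ, Rep y → |fl x - x| ≤ |y - x|)
    (hypot : ℝ → ℝ → ℝ)
    (hhypot : ∀ a b : ℝ, hypot a b = fl (Real.sqrt (a ^ 2 + b ^ 2)))
    (ν : ℝ) (hν : ν = 2 ^ eν * (2 - 2 ^ (1 - (p : ℤ))))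
    (t : ℝ) (ht : |t| ≤ ν) :
    0 ≤ |fl (t / fl (1 + hypot t 1))| ∧ |fl (t / fl (1 + hypot t 1))| ≤ 1 := by
  refine ⟨abs_nonneg _, ?_⟩
  have hzpos : ∀ k : ℤ, (0:ℝ) < 2 ^ k := fun k => zpow_pos two_pos k
  have hcastp1 : (((2:ℤ)^(p-1) : ℤ) : ℝ) = (2:ℝ)^((p:ℤ)-1) := by
    push_cast; rw [← zpow_natCast (2:ℝ) (p-1)]; congr 1; omega
  have hcastp : (((2:ℤ)^p : ℤ) : ℝ) = (2:ℝ)^(p:ℤ) := by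
    push_cast; rw [← zpow_natCast (2:ℝ) p]
  have hmcast : (((2:ℤ)^p - 1 : ℤ) : ℝ) = (2:ℝ)^(p:ℤ) - 1 := by
    rw [Int.cast_sub, Int.cast_one, hcastp]
  -- Rep of powers of two up to 2^eν
  have hRepPow : ∀ k : ℤ, k ≤ eν → Rep ((2:ℝ)^k) := by
    intro k hk
    rw [hRep]
    refine ⟨2^(p-1), k + 1 - p, ?_, by omega, ?_⟩
    · have h1 : (2:ℤ)^(p-1) < 2^p := pow_lt_pow_right₀ one_lt_two (by omega)
      have h2 : (0:ℤ) ≤ 2^(p-1) := pow_nonneg (by norm_num) _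
      rwa [abs_of_nonneg h2]
    · rw [hcastp1, ← zpow_add₀ (two_ne_zero : (2:ℝ) ≠ 0)]
      congr 1; omega
  have hRep1 : Rep 1 := by
    have := hRepPow 0 (by omega)
    simpa using this
  -- value of ν
  have hνval : ν = ((2:ℝ)^(p:ℤ) - 1) * 2^(eν+1-(p:ℤ)) := by
    have B1 : (2:ℝ)^eν * 2^(1-(p:ℤ)) = 2^(eν+1-(p:ℤ)) := by
      rw [← zpow_add₀ (two_ne_zero : (2:ℝ) ≠ 0)]; congr 1; omega
    have B2 : (2:ℝ)^(p:ℤ) * 2^(eν+1-(p:ℤ)) = 2^(eν+1) := by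
      rw [← zpow_add₀ (two_ne_zero : (2:ℝ) ≠ 0)]; congr 1; omega
    have B3 : (2:ℝ)^(eν+1) = 2^eν * 2 := zpow_add_one₀ two_ne_zero eν
    rw [hν]
    calc (2:ℝ)^eν * (2 - 2^(1-(p:ℤ)))
        = 2^eν * 2 - 2^eν * 2^(1-(p:ℤ)) := by ring
      _ = 2^(eν+1) - 2^(eν+1-(p:ℤ)) := by rw [B3, B1]
      _ = 2^(p:ℤ) * 2^(eν+1-(p:ℤ)) - 1 * 2^(eν+1-(p:ℤ)) := by rw [B2, one_mul]
      _ = ((2:ℝ)^(p:ℤ) - 1) * 2^(eν+1-(p:ℤ)) := by ring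
  have h2p1 : (0:ℤ) < 2^p := by positivity
  have hRepNu : Rep ν := by
    rw [hRep]
    refine ⟨2^p - 1, eν + 1 - p, ?_, by omega, ?_⟩
    · rw [abs_of_nonneg (by omega)]; omega
    · rw [hνval, hmcast]
  have hRepNeg : ∀ y : ℝ, Rep y → Rep (-y) := by
    intro y hy
    rw [hRep] at hy ⊢
    obtain ⟨m, e, hm, he, rfl⟩ := hy
    exact ⟨-m, e, by simpa using hm, he, by push_cast; ring⟩
  have hRep_le_nu : ∀ y : ℝ, Rep y → y ≤ ν := by
    intro y hy
    rw [hRep] at hy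
    obtain ⟨m, e, hm, he, rfl⟩ := hy
    have hm' : (m:ℝ) ≤ (2:ℝ)^(p:ℤ) - 1 := by
      have h1 : m ≤ 2^p - 1 := by have := abs_lt.mp hm; omega
      calc (m:ℝ) ≤ ((2^p - 1 : ℤ) : ℝ) := by exact_mod_cast h1
        _ = (2:ℝ)^(p:ℤ) - 1 := hmcast
    have he' : (2:ℝ)^e ≤ 2^(eν+1-(p:ℤ)) := zpow_le_zpow_right₀ one_le_two (by omega)
    have hp1 : (1:ℝ) ≤ (2:ℝ)^(p:ℤ) := one_le_zpow₀ one_le_two (by omega)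
    calc (m:ℝ) * 2^e ≤ ((2:ℝ)^(p:ℤ) - 1) * 2^e :=
          mul_le_mul_of_nonneg_right hm' (hzpos e).le
      _ ≤ ((2:ℝ)^(p:ℤ) - 1) * 2^(eν+1-(p:ℤ)) :=
          mul_le_mul_of_nonneg_left he' (by linarith)
      _ = ν := hνval.symm
  -- monotonicity consequences of nearest rounding
  have hfl_ge : ∀ x y : ℝ, Rep y → y ≤ x → y ≤ fl x := by
    intro x y hy hyx
    have h := hfl_near x y hy
    have hxy : |y - x| = x - y := by
      rw [abs_sub_comm]; exact abs_of_nonneg (by linarith)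
    rw [hxy] at h
    have := abs_le.mp h
    linarith [this.1]
  have hfl_le : ∀ x y : ℝ, Rep y → x ≤ y → fl x ≤ y := by
    intro x y hy hyx
    have h := hfl_near x y hy
    have hxy : |y - x| = y - x := abs_of_nonneg (by linarith)
    rw [hxy] at h
    have := abs_le.mp h
    linarith [this.2]
  -- no representable strictly between 1 and 1 + 2^(1-p)
  have hnogap : ∀ y : ℝ, Rep y → 1 < y → 1 + 2^(1-(p:ℤ)) ≤ y := by
    intro y hy h1y
    by_contra hlt
    push_neg at hlt
    rw [hRep] at hy
    obtain ⟨m, e, hm, _, rfl⟩ := hy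
    have hepos := hzpos e
    have hmub : (m:ℝ) ≤ (2:ℝ)^(p:ℤ) - 1 := by
      have h1 : m ≤ 2^p - 1 := by have := abs_lt.mp hm; omega
      calc (m:ℝ) ≤ ((2^p - 1 : ℤ) : ℝ) := by exact_mod_cast h1
        _ = (2:ℝ)^(p:ℤ) - 1 := hmcast
    have hm1 : 1 ≤ m := by
      by_contra hc
      push_neg at hc
      have : (m:ℝ) ≤ 0 := by exact_mod_cast (by omega : m ≤ 0)
      nlinarith
    have hm0 : (0:ℝ) < (m:ℝ) := by exact_mod_cast (by omega : (0:ℤ) < m)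
    have he1 : 1 - (p:ℤ) ≤ e := by
      by_contra hc
      push_neg at hc
      have h2e : (2:ℝ)^e ≤ 2^(-(p:ℤ)) := zpow_le_zpow_right₀ one_le_two (by omega)
      have hpp : (2:ℝ)^(p:ℤ) * 2^(-(p:ℤ)) = 1 := by
        rw [← zpow_add₀ (two_ne_zero : (2:ℝ) ≠ 0)]; simp
      have hp1 : (1:ℝ) ≤ (2:ℝ)^(p:ℤ) := one_le_zpow₀ one_le_two (by omega)
      have hle : (m:ℝ) * 2^e ≤ ((2:ℝ)^(p:ℤ) - 1) * 2^(-(p:ℤ)) :=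
        mul_le_mul hmub h2e (hzpos e).le (by linarith)
      nlinarith [hzpos (-(p:ℤ))]
    -- y is a positive integer multiple of 2^(1-p)
    set q : ℕ := (e - (1 - (p:ℤ))).toNat with hqdef
    have hq : e - (1 - (p:ℤ)) = (q:ℤ) := (Int.toNat_of_nonneg (by omega)).symm
    have hyeq : (m:ℝ) * 2^e = ((m * 2^q : ℤ) : ℝ) * 2^(1-(p:ℤ)) := by
      push_cast
      rw [mul_assoc, ← zpow_natCast (2:ℝ) q, ← zpow_add₀ (two_ne_zero : (2:ℝ) ≠ 0)]
      congr 2; omega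
    have hC : (((2:ℤ)^(p-1) : ℤ) : ℝ) * 2^(1-(p:ℤ)) = 1 := by
      rw [hcastp1, ← zpow_add₀ (two_ne_zero : (2:ℝ) ≠ 0)]
      norm_num
    have hgpos := hzpos (1-(p:ℤ))
    set n : ℤ := m * 2^q with hndef
    have hnlb : (2:ℤ)^(p-1) < n := by
      have h1 : (((2:ℤ)^(p-1) : ℤ) : ℝ) * 2^(1-(p:ℤ)) < (n:ℝ) * 2^(1-(p:ℤ)) := by
        rw [hC, ← hyeq]; exact h1y
      have h2 := lt_of_mul_lt_mul_right h1 hgpos.le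
      exact_mod_cast h2
    have hnub : n < (2:ℤ)^(p-1) + 1 := by
      have h1 : (n:ℝ) * 2^(1-(p:ℤ)) < (((2:ℤ)^(p-1) : ℤ) : ℝ) * 2^(1-(p:ℤ)) + 2^(1-(p:ℤ)) := by
        rw [hC, ← hyeq]; linarith
      have h2 : (n:ℝ) < (((2:ℤ)^(p-1) : ℤ) : ℝ) + 1 := by nlinarith
      exact_mod_cast h2
    omega
  -- if |x| < 1 + 2^(-p) then |fl x| ≤ 1
  have h2eps : (2:ℝ) * 2^(-(p:ℤ)) = 2^(1-(p:ℤ)) := by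
    rw [mul_comm, ← zpow_add_one₀ (two_ne_zero : (2:ℝ) ≠ 0)]
    congr 1; omega
  have hfl_abs : ∀ x : ℝ, |x| < 1 + 2^(-(p:ℤ)) → |fl x| ≤ 1 := by
    intro x hx
    have hx' := abs_lt.mp hx
    have e1 := hfl_near x 1 hRep1
    have e2 := hfl_near x (-1) (by simpa using hRepNeg 1 hRep1)
    have heps := hzpos (-(p:ℤ))
    have heps1 := hzpos (1-(p:ℤ))
    rw [abs_le]
    constructor
    · -- -1 ≤ fl x
      by_contra hc
      push_neg at hc
      have hgap2 : 1 + 2^(1-(p:ℤ)) ≤ -(fl x) :=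
        hnogap _ (hRepNeg _ (hfl_rep x)) (by linarith)
      have e2' : -(fl x - x) ≤ |(-1) - x| := le_trans (neg_le_abs _) e2
      rcases le_or_gt (-1 : ℝ) x with hcx | hcx
      · have habs : |(-1 : ℝ) - x| = 1 + x := by
          rw [abs_of_nonpos (by linarith : (-1:ℝ) - x ≤ 0)]; ring
        rw [habs] at e2'
        linarith
      · have habs : |(-1 : ℝ) - x| = -1 - x := by
          rw [abs_of_nonneg (by linarith : (0:ℝ) ≤ (-1:ℝ) - x)]
        rw [habs] at e2'
        linarith
    · -- fl x ≤ 1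
      by_contra hc
      push_neg at hc
      have hgap2 : 1 + 2^(1-(p:ℤ)) ≤ fl x := hnogap _ (hfl_rep x) hc
      have e1' : fl x - x ≤ |1 - x| := le_trans (le_abs_self _) e1
      rcases le_or_gt x 1 with hcx | hcx
      · have habs : |(1:ℝ) - x| = 1 - x := abs_of_nonneg (by linarith)
        rw [habs] at e1'
        linarith
      · have habs : |(1:ℝ) - x| = x - 1 := by
          rw [abs_of_nonpos (by linarith : (1:ℝ) - x ≤ 0)]; ring
        rw [habs] at e1'
        linarith
  -- set up s, h, d
  have hhyp : hypot t 1 = fl (Real.sqrt (t ^ 2 + 1)) := by rw [hhypot]; norm_num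
  rw [hhyp]
  set s : ℝ := Real.sqrt (t ^ 2 + 1) with hsdef
  set h : ℝ := fl s with hhdef
  set d : ℝ := fl (1 + h) with hddef
  have hs1 : 1 ≤ s := Real.one_le_sqrt.mpr (by nlinarith [sq_nonneg t])
  have hts : |t| < s := by
    have := Real.sqrt_lt_sqrt (sq_nonneg t) (by linarith : t^2 < t^2+1)
    rwa [Real.sqrt_sq_eq_abs] at this
  have hh1 : 1 ≤ h := hfl_ge s 1 hRep1 hs1
  have hhν : h ≤ ν := hRep_le_nu _ (hfl_rep s)
  have hd_h : h ≤ d := hfl_ge (1+h) h (hfl_rep s) (by linarith)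
  have hd1 : 1 ≤ d := le_trans hh1 hd_h
  have hdpos : 0 < d := by linarith
  have heps := hzpos (-(p:ℤ))
  -- the key bound
  have key : |t| < d * (1 + 2^(-(p:ℤ))) := by
    rcases le_or_gt s ν with hsν | hsν
    · -- s ≤ ν : binade argument
      set k : ℤ := Int.log 2 s with hkdef
      have hks : (2:ℝ)^k ≤ s := by
        have := Int.zpow_log_le_self (b:=2) (R:=ℝ) (by norm_num) (by linarith : (0:ℝ) < s)
        exact_mod_cast this
      have hsk : s < 2^(k+1) := by
        have := Int.lt_zpow_succ_log_self (b:=2) (R:=ℝ) (by norm_num) s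
        exact_mod_cast this
      have hν2 : ν < 2^(eν+1) := by
        rw [hν, zpow_add_one₀ (two_ne_zero : (2:ℝ) ≠ 0)]
        have := hzpos (1-(p:ℤ))
        nlinarith [hzpos eν]
      have hkν : k ≤ eν := by
        by_contra hc
        push_neg at hc
        have : (2:ℝ)^(eν+1) ≤ 2^k := zpow_le_zpow_right₀ one_le_two (by omega)
        linarith
      set g : ℝ := (2:ℝ)^(k+1-(p:ℤ)) with hgdef
      have hgpos : 0 < g := hzpos _
      set m : ℤ := ⌊s / g⌋ with hmdef
      have hms : (m:ℝ) * g ≤ s := by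
        rw [← le_div_iff₀ hgpos]; exact Int.floor_le _
      have hsm : s < ((m:ℝ) + 1) * g := by
        rw [← div_lt_iff₀ hgpos]; exact_mod_cast Int.lt_floor_add_one (s/g)
      have hgk : g ≤ (2:ℝ)^k := zpow_le_zpow_right₀ one_le_two (by omega)
      have hm1 : 1 ≤ m := by
        rw [hmdef, Int.le_floor]
        push_cast
        rw [le_div_iff₀ hgpos]
        linarith
      have hpg : (2:ℝ)^(p:ℤ) * g = 2^(k+1) := by
        rw [hgdef, ← zpow_add₀ (two_ne_zero : (2:ℝ) ≠ 0)]; congr 1; omega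
      have hm_ub : m < 2^p := by
        rw [hmdef, Int.floor_lt]
        rw [div_lt_iff₀ hgpos]
        calc s < 2^(k+1) := hsk
          _ = (2:ℝ)^(p:ℤ) * g := hpg.symm
          _ = ((2^p : ℤ):ℝ) * g := by rw [hcastp]
      have hRepA : Rep ((m:ℝ) * g) := by
        rw [hRep]
        exact ⟨m, k+1-(p:ℤ), by rw [abs_of_nonneg (by omega)]; exact hm_ub, by omega, by rw [hgdef]⟩
      have hg2 : g = 2 * ((2:ℝ)^k * 2^(-(p:ℤ))) := by
        rw [hgdef, ← zpow_add₀ (two_ne_zero : (2:ℝ) ≠ 0) k (-(p:ℤ)), mul_comm,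
          ← zpow_add_one₀ (two_ne_zero : (2:ℝ) ≠ 0)]
        congr 1; omega
      -- half-gap bound : s ≤ h + g/2
      have hhalf : s ≤ h + g / 2 := by
        rcases le_or_gt (s - (m:ℝ) * g) (g/2) with hcase | hcase
        · have := hfl_ge s _ hRepA hms
          linarith
        · -- the upper grid point is representable
          have hbrep : Rep (((m:ℝ) + 1) * g) := by
            rcases lt_or_ge (m+1) (2^p) with hlt | hge
            · rw [hRep]
              refine ⟨m+1, k+1-(p:ℤ), by rw [abs_of_nonneg (by omega)]; exact hlt, by omega, ?_⟩
              rw [hgdef]; push_cast; ring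
            · have hmeq : m + 1 = 2^p := by omega
              have hkeν : k + 1 ≤ eν := by
                by_contra hc2
                have hkeq : k = eν := by omega
                have haν : (m:ℝ) * g = ν := by
                  have hm' : (m:ℝ) = (2:ℝ)^(p:ℤ) - 1 := by
                    rw [show m = (2:ℤ)^p - 1 from by omega, hmcast]
                  rw [hm', hgdef, hkeq, hνval]
                linarith
              have hbval : ((m:ℝ) + 1) * g = (2:ℝ)^(k+1) := by
                have hm' : (m:ℝ) + 1 = (2:ℝ)^(p:ℤ) := by
                  have : (m:ℝ) = (((2:ℤ)^p - 1 : ℤ) : ℝ) := by exact_mod_cast congrArg (Int.cast : ℤ → ℝ) (by omega : m = 2^p - 1)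
                  rw [this, hmcast]; ring
                rw [hm', hpg]
              rw [hbval]
              exact hRepPow (k+1) hkeν
          have hnear := hfl_near s _ hbrep
          rw [abs_of_nonneg (by linarith : (0:ℝ) ≤ ((m:ℝ)+1) * g - s)] at hnear
          have := abs_le.mp hnear
          linarith [this.1]
      have hk_h : (2:ℝ)^k ≤ h := hfl_ge s _ (hRepPow k hkν) hks
      have e1 : (2:ℝ)^k * 2^(-(p:ℤ)) ≤ h * 2^(-(p:ℤ)) :=
        mul_le_mul_of_nonneg_right hk_h heps.le
      have e2 : h * 2^(-(p:ℤ)) ≤ d * 2^(-(p:ℤ)) :=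
        mul_le_mul_of_nonneg_right hd_h heps.le
      calc |t| < s := hts
        _ ≤ h + g/2 := hhalf
        _ = h + (2:ℝ)^k * 2^(-(p:ℤ)) := by rw [hg2]; ring
        _ ≤ d + d * 2^(-(p:ℤ)) := by linarith
        _ = d * (1 + 2^(-(p:ℤ))) := by ring
    · -- s > ν : then h = ν ≥ |t|
      have hνh : ν ≤ h := hfl_ge s ν hRepNu hsν.le
      have : |t| ≤ d := by linarith
      nlinarith
  have hx : |t / d| < 1 + 2^(-(p:ℤ)) := by
    rw [abs_div, abs_of_pos hdpos, div_lt_iff₀ hdpos]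
    linarith [key]
  exact hfl_abs _ hx
end

section
/- Let fl denote rounding to nearest with unit roundoff ε = 2^{-p}, and suppose t̂ = δ_θ·tan θ with 1-ε ≤ δ_θ ≤ 1+ε and t̂ ≥ μ (normal). Then ŝ = fl(√(t̂² + 1)) (correctly rounded hypot of (t̂,1)) satisfies ŝ = δ'_θ · sec θ with √(((1-ε)²+1)/2)·(1-ε) ≤ δ'_θ ≤ √(((1+ε)²+1)/2)·(1+ε), where sec θ = √(tan²θ + 1). -/
open Real

/-- If `t' = δθ · tan θ` with `1-ε ≤ δθ ≤ 1+ε` (where `ε = 2^(-p)`), and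
`s' = (1+e√)·√(t'²+1)` with `|e√| ≤ ε` (a correctly rounded hypot of `(t',1)`),
then `s' = δ' · sec θ` with
`√(((1-ε)²+1)/2)·(1-ε) ≤ δ' ≤ √(((1+ε)²+1)/2)·(1+ε)`, where `sec θ = √(tan²θ+1)`. -/
theorem stmt_6 (p : ℕ) (hp : 1 ≤ p) (ε : ℝ) (hε : ε = 2 ^ (-(p : ℤ)))
    (θ : ℝ) (hθ1 : 0 < θ) (hθ2 : θ ≤ π / 4)
    (δθ t' : ℝ) (hδ1 : 1 - ε ≤ δθ) (hδ2 : δθ ≤ 1 + ε)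
    (ht : t' = δθ * Real.tan θ)
    (s' es : ℝ) (hes : |es| ≤ ε)
    (hs : s' = (1 + es) * Real.sqrt (t' ^ 2 + 1)) :
    ∃ δ' : ℝ, s' = δ' * Real.sqrt (Real.tan θ ^ 2 + 1) ∧
      Real.sqrt (((1 - ε) ^ 2 + 1) / 2) * (1 - ε) ≤ δ' ∧
      δ' ≤ Real.sqrt (((1 + ε) ^ 2 + 1) / 2) * (1 + ε) := by
  have hε2 : ε ≤ 1 / 2 := by
    rw [hε]
    calc (2:ℝ) ^ (-(p:ℤ)) ≤ 2 ^ (-(1:ℤ)) := by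
          apply zpow_le_zpow_right₀ one_le_two; omega
      _ = 1/2 := by norm_num
  have hε0 : 0 < ε := by rw [hε]; positivity
  set T := Real.tan θ with hT
  have hT0 : 0 < T := Real.tan_pos_of_pos_of_lt_pi_div_two hθ1 (by linarith [pi_pos])
  have hT1 : T ≤ 1 := by
    rcases eq_or_lt_of_le hθ2 with h | h
    · simp [hT, h, Real.tan_pi_div_four]
    · have := Real.tan_lt_tan_of_nonneg_of_lt_pi_div_two hθ1.le (by linarith [pi_pos]) h
      rw [Real.tan_pi_div_four] at this; linarith
  have hden : (0:ℝ) < T ^ 2 + 1 := by positivity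
  set r : ℝ := (t' ^ 2 + 1) / (T ^ 2 + 1) with hr
  have hr0 : 0 ≤ r := by positivity
  have hδsq1 : (1 - ε) ^ 2 ≤ δθ ^ 2 := by nlinarith
  have hδsq2 : δθ ^ 2 ≤ (1 + ε) ^ 2 := by nlinarith
  have ha1 : (0:ℝ) ≤ 1 - (1 - ε) ^ 2 := by nlinarith
  have hb1 : (0:ℝ) ≤ (1 + ε) ^ 2 - 1 := by nlinarith
  have hTsq : (0:ℝ) ≤ 1 - T ^ 2 := by nlinarith
  have hrl : ((1 - ε) ^ 2 + 1) / 2 ≤ r := by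
    rw [hr, ht, le_div_iff₀ hden]
    have h1 := mul_nonneg (sub_nonneg.mpr hδsq1) (sq_nonneg T)
    have h2 := mul_nonneg ha1 hTsq
    clear_value T
    clear hε hs hes hδ1 hδ2 hδsq1 hδsq2 ha1 hb1 hTsq hT0 hT1 hθ1 hθ2 hε0 hε2 hr hr0 hden
    nlinarith [h1, h2]
  have hru : r ≤ ((1 + ε) ^ 2 + 1) / 2 := by
    rw [hr, ht, div_le_iff₀ hden]
    have h1 := mul_nonneg (sub_nonneg.mpr hδsq2) (sq_nonneg T)
    have h2 := mul_nonneg hb1 hTsq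
    clear_value T
    clear hε hs hes hδ1 hδ2 hδsq1 hδsq2 ha1 hb1 hTsq hT0 hT1 hθ1 hθ2 hε0 hε2 hrl hr hr0 hden
    nlinarith [h1, h2]
  have hkey : Real.sqrt r * Real.sqrt (T ^ 2 + 1) = Real.sqrt (t' ^ 2 + 1) := by
    rw [← Real.sqrt_mul hr0, hr, div_mul_cancel₀ _ hden.ne']
  have hes1 : 1 - ε ≤ 1 + es := by have := abs_le.mp hes; linarith
  have hes2 : 1 + es ≤ 1 + ε := by have := abs_le.mp hes; linarith
  refine ⟨(1 + es) * Real.sqrt r, ?_, ?_, ?_⟩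
  · rw [hs, ← hkey]; ring
  · rw [mul_comm (1 + es)]
    exact mul_le_mul (Real.sqrt_le_sqrt hrl) hes1 (by linarith) (Real.sqrt_nonneg _)
  · rw [mul_comm (1 + es)]
    exact mul_le_mul (Real.sqrt_le_sqrt hru) hes2 (by linarith) (Real.sqrt_nonneg _)
end

section
/- Under the hypotheses of the previous secant-error lemma, the implicitly computed cosine ĉ = fl(1/ŝ) and sine ŝn = fl(t̂/ŝ) satisfy ĉ = δ''·cos θ and ŝn = δ'''·sin θ, with (1-ε)/δ'⁺ ≤ δ'' ≤ (1+ε)/δ'⁻ and (1-ε)(1-ε)/δ'⁺ ≤ δ''' ≤ (1+ε)(1+ε)/δ'⁻, where δ'⁻ = √(((1-ε)²+1)/2)(1-ε) and δ'⁺ = √(((1+ε)²+1)/2)(1+ε). -/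
/-! Since `√(tan θ ^ 2 + 1) = sec θ`, dividing by `ŝ = δ' sec θ` turns `1` into `cos θ / δ'` and
`δθ tan θ` into `δθ sin θ / δ'`; the relative error factors then combine by interval arithmetic
on positive quantities, which needs `ε < 1` so that the lower bound for `δ'` is positive. -/

open Real Set

lemma two_zpow_neg_lt_one {p : ℕ} (hp : 1 ≤ p) : (2 : ℝ) ^ (-(p : ℤ)) < 1 :=
  zpow_lt_one_of_neg₀ one_lt_two (by omega)

lemma one_add_mem_Icc_of_abs_le {e ε : ℝ} (h : |e| ≤ ε) : 1 + e ∈ Icc (1 - ε) (1 + ε) := by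
  obtain ⟨h₁, h₂⟩ := abs_le.mp h
  constructor <;> linarith

lemma mul_mem_Icc_mul_of_mem_Icc {a lo hi b lo' hi' : ℝ} (ha : a ∈ Icc lo hi)
    (hb : b ∈ Icc lo' hi') (hlo : 0 ≤ lo) (hlo' : 0 ≤ lo') : a * b ∈ Icc (lo * lo') (hi * hi') :=
  ⟨mul_le_mul ha.1 hb.1 hlo' (hlo.trans ha.1),
    mul_le_mul ha.2 hb.2 (hlo'.trans hb.1) (hlo.trans (ha.1.trans ha.2))⟩

lemma div_mem_Icc_div_of_mem_Icc {a lo hi d dlo dhi : ℝ} (ha : a ∈ Icc lo hi) (hlo : 0 ≤ lo)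
    (hd : d ∈ Icc dlo dhi) (hdlo : 0 < dlo) : a / d ∈ Icc (lo / dhi) (hi / dlo) :=
  ⟨div_le_div₀ (hlo.trans ha.1) ha.1 (hdlo.trans_le hd.1) hd.2,
    div_le_div₀ (hlo.trans (ha.1.trans ha.2)) ha.2 hdlo hd.1⟩

lemma one_div_mul_sqrt_tan_sq_add_one {θ : ℝ} (hcos : 0 < cos θ) (δ : ℝ) :
    1 / (δ * √(tan θ ^ 2 + 1)) = cos θ / δ := by
  rw [add_comm, ← inv_sqrt_one_add_tan_sq hcos]
  field_simp

lemma mul_tan_div_mul_sqrt_tan_sq_add_one {θ : ℝ} (hcos : 0 < cos θ) (a δ : ℝ) :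
    a * tan θ / (δ * √(tan θ ^ 2 + 1)) = a / δ * sin θ := by
  rw [add_comm, ← tan_div_sqrt_one_add_tan_sq hcos, mul_div_mul_comm]

/-- Given `t' = δθ tan θ` with `|δθ - 1| ≤ ε`, and `s' = δ' sec θ` with
`δ'⁻ ≤ δ' ≤ δ'⁺` (the bounds of the secant-error lemma), the computed cosine
`c' = (1+e₁)/s'` and sine `n' = (1+e₂)·t'/s'` (each division with relative error `≤ ε`)
satisfy `c' = δ'' cos θ` and `n' = δ''' sin θ` with
`(1-ε)/δ'⁺ ≤ δ'' ≤ (1+ε)/δ'⁻` and `(1-ε)²/δ'⁺ ≤ δ''' ≤ (1+ε)²/δ'⁻`. -/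
theorem stmt_7 (p : ℕ) (hp : 1 ≤ p) (ε : ℝ) (hε : ε = 2 ^ (-(p : ℤ)))
    (θ : ℝ) (hθ1 : 0 < θ) (hθ2 : θ ≤ π / 4)
    (δθ t' δ' s' : ℝ) (hδ1 : 1 - ε ≤ δθ) (hδ2 : δθ ≤ 1 + ε)
    (ht : t' = δθ * Real.tan θ)
    (hs : s' = δ' * Real.sqrt (Real.tan θ ^ 2 + 1))
    (hδ'l : Real.sqrt (((1 - ε) ^ 2 + 1) / 2) * (1 - ε) ≤ δ')
    (hδ'u : δ' ≤ Real.sqrt (((1 + ε) ^ 2 + 1) / 2) * (1 + ε))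
    (c' n' e₁ e₂ : ℝ) (he₁ : |e₁| ≤ ε) (he₂ : |e₂| ≤ ε)
    (hc : c' = (1 + e₁) * (1 / s'))
    (hn : n' = (1 + e₂) * (t' / s')) :
    ∃ δ'' δ''' : ℝ,
      c' = δ'' * Real.cos θ ∧ n' = δ''' * Real.sin θ ∧
      (1 - ε) / (Real.sqrt (((1 + ε) ^ 2 + 1) / 2) * (1 + ε)) ≤ δ'' ∧
      δ'' ≤ (1 + ε) / (Real.sqrt (((1 - ε) ^ 2 + 1) / 2) * (1 - ε)) ∧
      (1 - ε) * (1 - ε) / (Real.sqrt (((1 + ε) ^ 2 + 1) / 2) * (1 + ε)) ≤ δ''' ∧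
      δ''' ≤ (1 + ε) * (1 + ε) / (Real.sqrt (((1 - ε) ^ 2 + 1) / 2) * (1 - ε)) := by
  have hε1 : 0 < 1 - ε := sub_pos.2 (hε ▸ two_zpow_neg_lt_one hp)
  have hcos : 0 < cos θ := cos_pos_of_mem_Ioo ⟨by linarith [pi_pos], by linarith [pi_pos]⟩
  have hδ'lo : 0 < √(((1 - ε) ^ 2 + 1) / 2) * (1 - ε) :=
    mul_pos (sqrt_pos.2 (by positivity)) hε1
  have hδ' : δ' ∈ Icc _ _ := ⟨hδ'l, hδ'u⟩
  have h₁ := one_add_mem_Icc_of_abs_le he₁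
  have h₂δθ := mul_mem_Icc_mul_of_mem_Icc (one_add_mem_Icc_of_abs_le he₂) ⟨hδ1, hδ2⟩ hε1.le hε1.le
  obtain ⟨hc₁, hc₂⟩ := div_mem_Icc_div_of_mem_Icc h₁ hε1.le hδ' hδ'lo
  obtain ⟨hn₁, hn₂⟩ := div_mem_Icc_div_of_mem_Icc h₂δθ (by positivity) hδ' hδ'lo
  refine ⟨(1 + e₁) / δ', (1 + e₂) * δθ / δ', ?_, ?_, hc₁, hc₂, hn₁, hn₂⟩
  · rw [hc, hs, one_div_mul_sqrt_tan_sq_add_one hcos]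
    ring
  · rw [hn, ht, hs, mul_tan_div_mul_sqrt_tan_sq_add_one hcos]
    ring
end

section
/- Let R = [[r₁₁, r₁₂],[0, r₂₂]] be upper triangular with r₁₁ > 0, and let φ satisfy tan(2φ) = 2 r₁₂ r₂₂/(r₁₁² + r₁₂² − r₂₂²) with |φ| ≤ π/4. Define ψ by tan ψ = (r₁₂ + r₂₂ tan φ)/r₁₁. Then the matrix U_φᵀ R V_ψ is diagonal, with diagonal entries σ₁ = r₁₁·(sec ψ/sec φ) and σ₂ = r₂₂·(sec φ/sec ψ). -/
/-!
The relation for `tan ψ` says exactly that the `(1,2)` entry of `U_φᵀ R V_ψ` vanishes. Multiplied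
by `r₁₁ cos φ` and reduced by that relation, the `(2,1)` entry becomes `cos ψ` times the
difference of the two sides of the relation for `tan 2φ`, written as
`sin φ cos φ (r₁₁² + r₁₂² − r₂₂²) = (cos² φ − sin² φ) r₁₂ r₂₂`. The diagonal entries then
collapse by `sin² + cos² = 1`.
-/

open Matrix Real

theorem rotation_transpose_mul_upper_mul_rotation {K : Type*} [CommRing K] (c s c' s' a b d : K) :
    !![c, -s; s, c]ᵀ * !![a, b; 0, d] * !![c', -s'; s', c'] =
      !![c * (a * c' + b * s') + s * d * s', c * (b * c' - a * s') + s * d * c';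
        c * d * s' - s * (a * c' + b * s'), c * d * c' - s * (b * c' - a * s')] := by
  rw [show !![c, -s; s, c]ᵀ = !![c, s; -s, c] from (transposeᵣ_eq _).symm, mul_fin_two,
    mul_fin_two]
  ext i j
  fin_cases i <;> fin_cases j <;> simp <;> ring

theorem rotation_transpose_mul_upper_mul_rotation_eq_diagonal {K : Type*} [Field K]
    {c s c' s' a b d : K} (hc : c ≠ 0) (hc' : c' ≠ 0) (ha : a ≠ 0)
    (hcs : s ^ 2 + c ^ 2 = 1) (hcs' : s' ^ 2 + c' ^ 2 = 1)
    (hright : a * c * s' = (b * c + d * s) * c')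
    (hleft : s * c * (a ^ 2 + b ^ 2 - d ^ 2) = (c ^ 2 - s ^ 2) * (b * d)) :
    !![c, -s; s, c]ᵀ * !![a, b; 0, d] * !![c', -s'; s', c'] =
      !![a * (c / c'), 0; 0, d * (c' / c)] := by
  have h₁₁ : c * (a * c' + b * s') + s * d * s' = a * (c / c') := by
    field_simp
    linear_combination -s' * hright + a * c * hcs'
  have h₁₂ : c * (b * c' - a * s') + s * d * c' = 0 := by linear_combination -hright
  have h₂₁ : c * d * s' - s * (a * c' + b * s') = 0 := by
    have : a * c * (c * d * s' - s * (a * c' + b * s')) = 0 := by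
      linear_combination (c * d - s * b) * hright - c' * hleft
    simpa [ha, hc] using this
  have h₂₂ : c * d * c' - s * (b * c' - a * s') = d * (c' / c) := by
    field_simp
    linear_combination s * hright + d * c' * hcs
  rw [rotation_transpose_mul_upper_mul_rotation, h₁₁, h₁₂, h₂₁, h₂₂]

theorem mul_cos_mul_sin_eq_of_tan_eq {φ ψ a b d : ℝ} (hφ : cos φ ≠ 0) (hψ : cos ψ ≠ 0)
    (ha : a ≠ 0) (h : tan ψ = (b + d * tan φ) / a) :
    a * cos φ * sin ψ = (b * cos φ + d * sin φ) * cos ψ := by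
  rw [tan_eq_sin_div_cos, tan_eq_sin_div_cos] at h
  field_simp at h
  linear_combination h

theorem sin_mul_cos_mul_eq_of_tan_two_mul_eq {φ p q : ℝ} (hφ : cos (2 * φ) ≠ 0) (hq : q ≠ 0)
    (h : tan (2 * φ) = 2 * p / q) :
    sin φ * cos φ * q = (cos φ ^ 2 - sin φ ^ 2) * p := by
  rw [tan_eq_sin_div_cos, sin_two_mul, cos_two_mul'] at h
  rw [cos_two_mul'] at hφ
  field_simp at h
  exact h

theorem stmt_12_general (r₁₁ r₁₂ r₂₂ φ ψ : ℝ)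
    (hr : 0 < r₁₁)
    (hden : r₁₁ ^ 2 + r₁₂ ^ 2 - r₂₂ ^ 2 ≠ 0)
    (hc2φ : Real.cos (2 * φ) ≠ 0)
    (htan2φ : Real.tan (2 * φ) = 2 * r₁₂ * r₂₂ / (r₁₁ ^ 2 + r₁₂ ^ 2 - r₂₂ ^ 2))
    (hcφ : 0 < Real.cos φ) (hcψ : 0 < Real.cos ψ)
    (htanψ : Real.tan ψ = (r₁₂ + r₂₂ * Real.tan φ) / r₁₁) :
    (!![Real.cos φ, -Real.sin φ; Real.sin φ, Real.cos φ])ᵀ *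
        !![r₁₁, r₁₂; 0, r₂₂] *
        !![Real.cos ψ, -Real.sin ψ; Real.sin ψ, Real.cos ψ] =
      !![r₁₁ * ((1 / Real.cos ψ) / (1 / Real.cos φ)), 0;
         0, r₂₂ * ((1 / Real.cos φ) / (1 / Real.cos ψ))] := by
  rw [div_div_div_cancel_left' _ _ one_ne_zero, div_div_div_cancel_left' _ _ one_ne_zero]
  rw [mul_assoc] at htan2φ
  exact rotation_transpose_mul_upper_mul_rotation_eq_diagonal hcφ.ne' hcψ.ne' hr.ne'
    (sin_sq_add_cos_sq φ) (sin_sq_add_cos_sq ψ)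
    (mul_cos_mul_sin_eq_of_tan_eq hcφ.ne' hcψ.ne' hr.ne' htanψ)
    (sin_mul_cos_mul_eq_of_tan_two_mul_eq hc2φ hden htan2φ)

/-- Exact SVD of an upper triangular 2×2 matrix `R` with `r₁₁ > 0`: if
`tan(2φ) = 2r₁₂r₂₂/(r₁₁² + r₁₂² − r₂₂²)` with `|φ| ≤ π/4`, and
`tan ψ = (r₁₂ + r₂₂ tan φ)/r₁₁`, then `U_φᵀ R V_ψ` is diagonal with entries
`σ₁ = r₁₁·(sec ψ/sec φ)` and `σ₂ = r₂₂·(sec φ/sec ψ)`. -/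
theorem stmt_12 (r₁₁ r₁₂ r₂₂ φ ψ : ℝ)
    (hr : 0 < r₁₁)
    (hden : r₁₁ ^ 2 + r₁₂ ^ 2 - r₂₂ ^ 2 ≠ 0)
    (hφ : |φ| ≤ π / 4) (hc2φ : Real.cos (2 * φ) ≠ 0)
    (htan2φ : Real.tan (2 * φ) = 2 * r₁₂ * r₂₂ / (r₁₁ ^ 2 + r₁₂ ^ 2 - r₂₂ ^ 2))
    (hcφ : 0 < Real.cos φ) (hcψ : 0 < Real.cos ψ)
    (htanψ : Real.tan ψ = (r₁₂ + r₂₂ * Real.tan φ) / r₁₁) :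
    (!![Real.cos φ, -Real.sin φ; Real.sin φ, Real.cos φ])ᵀ *
        !![r₁₁, r₁₂; 0, r₂₂] *
        !![Real.cos ψ, -Real.sin ψ; Real.sin ψ, Real.cos ψ] =
      !![r₁₁ * ((1 / Real.cos ψ) / (1 / Real.cos φ)), 0;
         0, r₂₂ * ((1 / Real.cos φ) / (1 / Real.cos ψ))] :=
  stmt_12_general r₁₁ r₁₂ r₂₂ φ ψ hr hden hc2φ htan2φ hcφ hcψ htanψ
end
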